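/- arXiv:1010.0463 — 4 statements merged into one kernel-verified Lean document; each statement's English description precedes it below -/
import Mathlib

section
/- Let λ be a covariant highest weight for gl(m|n), μ a partition with 0 ≤ λ_i − μ_i ≤ n for all i = 1,…,m, r = μ₁, σ_i = μ_i − i + 1, and l⁰_{r+p,j} = λ⁰_{r+p,j} − j + 1 where λ⁰_{r+p,j} = min{λ'_j, μ'_{j−p}} (with μ'_i = +∞ for i ≤ 0, μ'_{r+1} = 0, λ' the conjugate of Γ_λ). Then for each p = 1,…,n the following identity of rational functions in u holds: ∏_{j=1}^{r+p}(u + l⁰_{r+p,j} + p − 1) / ∏_{j=1}^{r+p−1}(u + l⁰_{r+p−1,j} + p − 1) = (u + λ_{m+p} + m)(u − r)/(u + m) · ∏_{j : 1 ≤ j ≤ m, λ_j − μ_j ≥ p} (u − σ_j + 1)/(u − σ_j). -/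
/-!
Write `L = λ'` and `M = μ'`. For `j = p + k` the numerator factor is `u + λ⁰_{r+p,p+k} - k` and
the denominator factor is `u + λ⁰_{r+p-1,p+k} - k = u + min(L(p+k), M(k+1)) - k`; the factors
with `j < p` agree and cancel, and the missing denominator factor for `k = r` would be `u - r`.
Each ratio of the `k`-th factors telescopes to `∏ (u + s - μ_s) / (u + s - 1 - μ_s)` over the
rows `s` of `Γ_λ` with `μ_s = k` and `Γ_λ`-row length at least `p + k` (set `μ_s = 0` for
`s > m`), because these rows form exactly the interval between the two minima. Rows `s ≤ m`
qualify iff `λ_s - μ_s ≥ p`, giving the factors in `σ_s`; rows `s > m` qualify iff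
`s ≤ m + λ_{m+p}`, and they telescope to `(u + λ_{m+p} + m) / (u + m)`.
-/

/-- Row lengths of the Young diagram `Γ_λ` attached to the covariant highest
weight `λ = (lam | nu)`. -/
def GammaRows (m n : ℕ) (lam : Fin m → ℕ) (nu : Fin n → ℕ) : ℕ → ℕ :=
  fun i => if h : i < m then lam ⟨i, h⟩
    else (Finset.univ.filter fun p : Fin n => i - m + 1 ≤ nu p).card

open Finset

lemma lt_natCard_iff_of_antitone {ρ : ℕ → ℕ} (hρ : Antitone ρ) {c N : ℕ} (hN : ρ N ≤ c)
    (i : ℕ) : i < Nat.card {i // c < ρ i} ↔ c < ρ i := by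
  have hex : ∃ N, ρ N ≤ c := ⟨N, hN⟩
  have hset : ∀ i, c < ρ i ↔ i < Nat.find hex := fun i => by
    rw [Nat.lt_find_iff]
    exact ⟨fun h j hj => by have := hρ hj; omega, fun h => by simpa using h i le_rfl⟩
  rw [Nat.card_congr ((Equiv.subtypeEquivRight hset).trans Fin.equivSubtype.symm), Nat.card_fin,
    hset]

lemma lt_card_filter_le_iff_of_antitone {n : ℕ} {g : Fin n → ℕ} (hg : Antitone g) (c j : ℕ) :
    j < #{q | c ≤ g q} ↔ ∃ h : j < n, c ≤ g ⟨j, h⟩ := by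
  constructor
  · intro hj
    have hjn : j < n := hj.trans_le ((card_filter_le _ _).trans_eq (card_fin n))
    refine ⟨hjn, ?_⟩
    by_contra! hc
    have hsub : ({q | c ≤ g q} : Finset (Fin n)) ⊆ Iio ⟨j, hjn⟩ := fun q hq => by
      rw [mem_filter] at hq
      by_contra hle
      exact (hc.trans_le' (hg (not_lt.mp (mem_Iio.not.mp hle)))).not_ge hq.2
    simpa using hj.trans_le (card_le_card hsub)
  · rintro ⟨hjn, hc⟩
    have hsub : Iic (⟨j, hjn⟩ : Fin n) ⊆ ({q | c ≤ g q} : Finset (Fin n)) := fun q hq =>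
      mem_filter.mpr ⟨mem_univ _, hc.trans (hg (mem_Iic.mp hq))⟩
    simpa using card_le_card hsub

section Telescoping

variable {G : Type*} [CommGroup G]

lemma prod_Ico_shift_div (f : ℤ → G) (k : ℤ) {c d : ℕ} (h : c ≤ d) :
    ∏ i ∈ Ico c d, f (i + 1 - k) / f (i - k) = f (d - k) / f (c - k) := by
  simpa [add_sub_right_comm] using prod_Ico_div (fun i : ℕ => f (i - k)) h

lemma prod_Ico_one_add_eq (g : ℕ → G) {p : ℕ} (hp : 1 ≤ p) (N : ℕ) :
    ∏ j ∈ Ico 1 (p + N), g j = (∏ j ∈ Ico 1 p, g j) * ∏ k ∈ range N, g (p + k) := by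
  rw [← prod_Ico_consecutive g hp (Nat.le_add_right p N), prod_Ico_eq_prod_range g p,
    Nat.add_sub_cancel_left]

end Telescoping

/-- `λ⁰_{r+q,j}` of the paper when `L = λ'` and `M = μ'`. -/
def lamZero (L M : ℕ → ℕ) (q j : ℕ) : ℕ := if q < j then min (L j) (M (j - q)) else L j

section LamZero

variable {G : Type*} [CommGroup G] (f : ℤ → G) {ρ μ L M : ℕ → ℕ} {p r : ℕ}

lemma filter_eq_Ico_lamZero (hL : ∀ j i, 1 ≤ j → (i < L j ↔ j ≤ ρ i))
    (hM : ∀ k i, 1 ≤ k → (i < M k ↔ k ≤ μ i)) (hp : 1 ≤ p) {R : Finset ℕ}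
    (hR : ∀ i, i ∈ R ↔ p + μ i ≤ ρ i) (k : ℕ) :
    {i ∈ R | μ i = k} = Ico (lamZero L M (p - 1) (p + k)) (lamZero L M p (p + k)) := by
  ext i
  have hpk := hL (p + k) i (by omega)
  have hk := hM (k + 1) i (by omega)
  simp only [mem_filter, mem_Ico, hR, lamZero, if_pos (show p - 1 < p + k by omega),
    show p + k - (p - 1) = k + 1 by omega, Nat.add_sub_cancel_left]
  rcases Nat.eq_zero_or_pos k with rfl | hk0
  · simp only [lt_irrefl, if_false, Nat.add_zero, zero_add] at hpk hk ⊢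
    omega
  · have hk' := hM k i hk0
    rw [if_pos (by omega)]
    omega

lemma lamZero_pred_le (hM : ∀ k i, 1 ≤ k → (i < M k ↔ k ≤ μ i)) (hp : 1 ≤ p) (k : ℕ) :
    lamZero L M (p - 1) (p + k) ≤ lamZero L M p (p + k) := by
  have h1 := hM (k + 1) (M k) le_add_self
  have h2 := hM k (M k)
  simp only [lamZero, show p + k - (p - 1) = k + 1 by omega, Nat.add_sub_cancel_left]
  split_ifs <;> omega

lemma prod_range_lamZero_div (hL : ∀ j i, 1 ≤ j → (i < L j ↔ j ≤ ρ i))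
    (hM : ∀ k i, 1 ≤ k → (i < M k ↔ k ≤ μ i)) (hp : 1 ≤ p) (hμ : ∀ i, μ i ≤ r)
    {R : Finset ℕ} (hR : ∀ i, i ∈ R ↔ p + μ i ≤ ρ i) :
    (∏ k ∈ range (r + 1), f (lamZero L M p (p + k) - k)) /
        ∏ k ∈ range r, f (lamZero L M (p - 1) (p + k) - k) =
      f (-r) * ∏ i ∈ R, f (i + 1 - μ i) / f (i - μ i) := by
  have hfiber : ∏ i ∈ R, f (i + 1 - μ i) / f (i - μ i) =
      ∏ k ∈ range (r + 1), f (lamZero L M p (p + k) - k) / f (lamZero L M (p - 1) (p + k) - k) := by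
    rw [← prod_fiberwise_of_maps_to (g := μ) fun i _ => mem_range.2 (Nat.lt_succ_of_le (hμ i))]
    refine prod_congr rfl fun k _ => ?_
    rw [prod_congr rfl fun i hi => by rw [(mem_filter.1 hi).2],
      filter_eq_Ico_lamZero hL hM hp hR k, prod_Ico_shift_div f k (lamZero_pred_le hM hp k)]
  have hbot : lamZero L M (p - 1) (p + r) = 0 := by
    have := hM (r + 1) 0 le_add_self
    simp only [lamZero, if_pos (show p - 1 < p + r by omega), show p + r - (p - 1) = r + 1 by omega]
    have := hμ 0
    omega
  rw [hfiber, prod_div_distrib, prod_range_succ (fun k => f (lamZero L M (p - 1) (p + k) - k)) r,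
    hbot, div_mul_eq_div_div, Nat.cast_zero, zero_sub, mul_div_cancel]

lemma prod_Icc_lamZero_div (hp : 1 ≤ p) :
    (∏ j ∈ Icc 1 (r + p), f ((lamZero L M p j : ℤ) - j + p)) /
        ∏ j ∈ Icc 1 (r + p - 1), f ((lamZero L M (p - 1) j : ℤ) - j + p) =
      (∏ k ∈ range (r + 1), f (lamZero L M p (p + k) - k)) /
        ∏ k ∈ range r, f (lamZero L M (p - 1) (p + k) - k) := by
  have hlow : ∏ j ∈ Ico 1 p, f ((lamZero L M (p - 1) j : ℤ) - j + p) =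
      ∏ j ∈ Ico 1 p, f ((lamZero L M p j : ℤ) - j + p) := prod_congr rfl fun j hj => by
    have := (mem_Ico.1 hj).2
    simp only [lamZero, if_neg (show ¬p - 1 < j by omega), if_neg (show ¬p < j by omega)]
  rw [← Ico_add_one_right_eq_Icc, ← Ico_add_one_right_eq_Icc, show r + p + 1 = p + (r + 1) by omega,
    show r + p - 1 + 1 = p + r by omega, prod_Ico_one_add_eq _ hp, prod_Ico_one_add_eq _ hp,
    hlow, mul_div_mul_left_eq_div]
  congr 1 <;> refine prod_congr rfl fun k _ => congrArg f ?_ <;> push_cast <;> ring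

end LamZero

def extendByZero {m : ℕ} (f : Fin m → ℕ) (i : ℕ) : ℕ := if h : i < m then f ⟨i, h⟩ else 0

lemma lt_card_filter_le_iff_extendByZero {m : ℕ} {f : Fin m → ℕ} (hf : Antitone f) {k : ℕ}
    (hk : 1 ≤ k) (i : ℕ) : i < #{q | k ≤ f q} ↔ k ≤ extendByZero f i := by
  rw [lt_card_filter_le_iff_of_antitone hf, extendByZero]
  split_ifs with hi
  · exact ⟨fun ⟨_, h⟩ => h, fun h => ⟨hi, h⟩⟩
  · exact ⟨fun ⟨h, _⟩ => absurd h hi, fun h => by omega⟩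

lemma prod_map_val_union_Ico {G : Type*} [CommGroup G] (f : ℤ → G) {m : ℕ} (mu : Fin m → ℕ)
    (S : Finset (Fin m)) (c : ℕ) :
    ∏ i ∈ S.map Fin.valEmbedding ∪ Ico m (m + c),
        f (i + 1 - extendByZero mu i) / f (i - extendByZero mu i) =
      f (m + c) / f m * ∏ i ∈ S, f (i + 1 - mu i) / f (i - mu i) := by
  have hdisj : Disjoint (S.map Fin.valEmbedding) (Ico m (m + c)) :=
    disjoint_left.2 fun i hi hi' => by
      obtain ⟨a, -, rfl⟩ := mem_map.1 hi
      exact (mem_Ico.1 hi').1.not_gt a.isLt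
  rw [prod_union hdisj, prod_map, mul_comm]
  congr 1
  · rw [prod_congr rfl fun i hi => by
      rw [extendByZero, dif_neg (mem_Ico.1 hi).1.not_gt, Nat.cast_zero],
      prod_Ico_shift_div f 0 (Nat.le_add_right m c)]
    push_cast
    simp only [sub_zero]
  · exact prod_congr rfl fun i _ => by simp [extendByZero]

section GammaRows

variable {m n : ℕ} {lam : Fin m → ℕ} {nu : Fin n → ℕ}

lemma gammaRows_antitone (hm : 0 < m) (hlam : Antitone lam)
    (hell : (Finset.univ.filter fun p : Fin n => nu p ≠ 0).card
      ≤ lam ⟨m - 1, Nat.sub_lt hm one_pos⟩) :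
    Antitone (GammaRows m n lam nu) := by
  intro i j hij
  unfold GammaRows
  split_ifs with hj hi hi
  · exact hlam (Fin.mk_le_mk.2 hij)
  · omega
  · refine (card_le_card fun q hq => ?_).trans (hell.trans (hlam (Fin.mk_le_mk.2 (by omega))))
    simp only [mem_filter, mem_univ, true_and] at hq ⊢
    omega
  · exact card_le_card (monotone_filter_right _ fun q hq => by omega)

lemma gammaRows_add_sum_eq_zero : GammaRows m n lam nu (m + ∑ q, nu q) = 0 := by
  rw [GammaRows, dif_neg (by omega), card_eq_zero, filter_eq_empty_iff]
  intro q _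
  have := single_le_sum (fun q _ => Nat.zero_le (nu q)) (mem_univ q)
  omega

lemma mem_map_val_union_Ico_iff (hnu : Antitone nu) {p : ℕ} (hp1 : 1 ≤ p) (hpn : p ≤ n)
    (mu : Fin m → ℕ) (i : ℕ) :
    i ∈ ({i : Fin m | mu i + p ≤ lam i} : Finset (Fin m)).map Fin.valEmbedding ∪
        Ico m (m + nu ⟨p - 1, by omega⟩) ↔ p + extendByZero mu i ≤ GammaRows m n lam nu i := by
  by_cases hi : i < m
  · simp only [extendByZero, GammaRows, hi, dif_pos, mem_union, mem_map, mem_filter, mem_univ,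
      true_and, Fin.valEmbedding_apply, mem_Ico, not_le.2 hi, false_and, or_false]
    refine ⟨?_, fun h => ⟨⟨i, hi⟩, by omega, rfl⟩⟩
    rintro ⟨q, hq, rfl⟩
    simp only [Fin.eta]
    omega
  · have hconj := lt_card_filter_le_iff_of_antitone hnu (i - m + 1) (p - 1)
    have hval : ∀ a : Fin m, Fin.valEmbedding a ≠ i := fun a h => hi (h ▸ a.isLt)
    simp only [extendByZero, GammaRows, hi, dif_neg, not_false_eq_true, mem_union, mem_map,
      mem_Ico, hval, and_false, exists_false, false_or,
      exists_prop_of_true (show p - 1 < n by omega)] at hconj ⊢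
    omega

end GammaRows

lemma RatFunc.X_add_intCast_ne_zero {K : Type*} [Field K] (c : ℤ) : (X : RatFunc K) + c ≠ 0 := by
  have h : (X : RatFunc K) + c =
      algebraMap (Polynomial K) (RatFunc K) (Polynomial.X + Polynomial.C (c : K)) := by
    simp [algebraMap_X]
  exact h ▸ algebraMap_ne_zero (Polynomial.X_add_C_ne_zero _)

/-- Lemma 4.8 of the paper: with `λ⁰_{r+q, j} = min (λ'_j) (μ'_{j-q})`
(the minimum being `λ'_j` when `j ≤ q`), `l⁰_{r+q,j} = λ⁰_{r+q,j} - j + 1`,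
`σ_i = μ_i - i + 1` and `r = μ₁`, for each `p = 1, …, n` the identity of rational
functions in `u` holds:
`∏_{j=1}^{r+p} (u + l⁰_{r+p,j} + p - 1) / ∏_{j=1}^{r+p-1} (u + l⁰_{r+p-1,j} + p - 1)
  = (u + λ_{m+p} + m)(u - r)/(u + m) · ∏_{λ_j - μ_j ≥ p} (u - σ_j + 1)/(u - σ_j)`. -/
theorem stmt_4 (m n : ℕ) (hm : 0 < m)
    (lam : Fin m → ℕ) (nu : Fin n → ℕ)
    (hlam : ∀ i j : Fin m, i ≤ j → lam j ≤ lam i)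
    (hnu : ∀ p q : Fin n, p ≤ q → nu q ≤ nu p)
    (hell : (Finset.univ.filter fun p : Fin n => nu p ≠ 0).card
      ≤ lam ⟨m - 1, Nat.sub_lt hm one_pos⟩)
    (mu : Fin m → ℕ) (hmu : ∀ i j : Fin m, i ≤ j → mu j ≤ mu i)
    (p : ℕ) (hp1 : 1 ≤ p) (hpn : p ≤ n)
    (lam0 : ℕ → ℕ → ℕ)
    (hlam0 : ∀ q j, lam0 q j = if q < j then
        min (Nat.card {i : ℕ // j - 1 < GammaRows m n lam nu i})
          ((Finset.univ.filter fun i : Fin m => j - q ≤ mu i).card)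
      else Nat.card {i : ℕ // j - 1 < GammaRows m n lam nu i})
    (r : ℕ) (hr : r = mu ⟨0, hm⟩) :
    (∏ j ∈ Finset.Icc 1 (r + p),
        ((RatFunc.X : RatFunc ℚ) + (((lam0 p j : ℤ) - j + p : ℤ) : RatFunc ℚ))) /
      (∏ j ∈ Finset.Icc 1 (r + p - 1),
        ((RatFunc.X : RatFunc ℚ) + (((lam0 (p - 1) j : ℤ) - j + p : ℤ) : RatFunc ℚ)))
    = ((RatFunc.X : RatFunc ℚ) + (nu ⟨p - 1, by omega⟩ : RatFunc ℚ) + (m : RatFunc ℚ))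
        * ((RatFunc.X : RatFunc ℚ) - (r : RatFunc ℚ))
        / ((RatFunc.X : RatFunc ℚ) + (m : RatFunc ℚ))
        * ∏ i ∈ Finset.univ.filter (fun i : Fin m => mu i + p ≤ lam i),
            ((RatFunc.X : RatFunc ℚ) - (((mu i : ℤ) - (i : ℕ) : ℤ) : RatFunc ℚ) + 1)
            / ((RatFunc.X : RatFunc ℚ) - (((mu i : ℤ) - (i : ℕ) : ℤ) : RatFunc ℚ)) := by
  obtain rfl : lam0 = lamZero (fun j => Nat.card {i : ℕ // j - 1 < GammaRows m n lam nu i})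
      (fun k => #{i | k ≤ mu i}) := funext₂ hlam0
  have hL (j i : ℕ) (hj : 1 ≤ j) : i < Nat.card {i : ℕ // j - 1 < GammaRows m n lam nu i} ↔
      j ≤ GammaRows m n lam nu i := by
    rw [lt_natCard_iff_of_antitone (gammaRows_antitone hm hlam hell)
      (gammaRows_add_sum_eq_zero.trans_le (Nat.zero_le _))]
    omega
  have hμ (i : ℕ) : extendByZero mu i ≤ r := by
    unfold extendByZero
    split_ifs
    · exact hr ▸ hmu _ _ (Fin.mk_le_mk.2 (Nat.zero_le _))
    · exact Nat.zero_le r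
  have hM (k i : ℕ) (hk : 1 ≤ k) : i < #{q | k ≤ mu q} ↔ k ≤ extendByZero mu i :=
    lt_card_filter_le_iff_extendByZero hmu hk i
  let u (c : ℤ) : (RatFunc ℚ)ˣ :=
    Units.mk0 (RatFunc.X + (c : RatFunc ℚ)) (RatFunc.X_add_intCast_ne_zero c)
  have key := congrArg Units.val <| (prod_Icc_lamZero_div u hp1).trans <|
    (prod_range_lamZero_div u hL hM hp1 hμ (mem_map_val_union_Ico_iff hnu hp1 hpn mu)).trans <|
    congrArg _ (prod_map_val_union_Ico u mu _ _)
  simp only [Units.val_mul, Units.val_div_eq_div_val, Units.coe_prod, Units.val_mk0, u] at key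
  rw [key, ← mul_assoc]
  congr 1
  · push_cast
    ring
  · exact prod_congr rfl fun i _ => by push_cast; ring
end

section
/- Let λ be a covariant highest weight for gl(m|n) and μ a partition with 0 ≤ λ_i − μ_i ≤ n for all i. The Drinfeld polynomials of the Y(gl_n)-module L(λ)⁺_μ are P_k(u) = ∏_α (u − c(α)) for k = 1,…,n−1, where α runs over the leftmost boxes of the rows of length k in the skew diagram Γ_λ/μ and c(α) = j − i is the content of the box α in row i, column j. Equivalently, defining σ_i = μ_i − i + 1, P_k(u) = ∏_{i : λ_i − μ_i = k} (u − σ_i) · ∏_{j=1}^{λ_{m+k} − λ_{m+k+1}} (u + λ_{m+k+1} + m + j − 1), and these two product formulas agree as polynomials in u. -/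
open Finset Polynomial

section Antitone

variable {n : ℕ} {nu : Fin n → ℕ}

theorem lt_card_filter_le_iff (hnu : Antitone nu) (c : Fin n) (j : ℕ) :
    (c : ℕ) < #{p | j ≤ nu p} ↔ j ≤ nu c := by
  constructor
  · intro hlt
    by_contra! hcj
    have hsub : ({p | j ≤ nu p} : Finset (Fin n)) ⊆ Iio c := fun p hp => by
      simp only [mem_filter, mem_univ, true_and] at hp
      by_contra! hcp
      exact (hcj.trans_le hp).not_ge (hnu (by simpa using hcp))
    have := card_le_card hsub
    rw [Fin.card_Iio] at this
    omega
  · intro hjc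
    have hsub : Iic c ⊆ ({p | j ≤ nu p} : Finset (Fin n)) := fun p hp => by
      simp only [mem_filter, mem_univ, true_and]
      exact hjc.trans (hnu (mem_Iic.mp hp))
    have := card_le_card hsub
    rw [Fin.card_Iic] at this
    omega

theorem card_filter_le_eq_iff (hnu : Antitone nu) {c d : Fin n} (hcd : (d : ℕ) = c + 1)
    (j : ℕ) : #{p | j ≤ nu p} = d ↔ nu d < j ∧ j ≤ nu c := by
  rw [← lt_card_filter_le_iff hnu c, ← not_le, ← lt_card_filter_le_iff hnu d]
  omega

theorem filter_range_card_filter_le_eq (hnu : Antitone nu) {c d : Fin n}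
    (hcd : (d : ℕ) = c + 1) {N : ℕ} (hN : nu c ≤ N) :
    (range N).filter (fun x => #{p | x + 1 ≤ nu p} = d) = Ico (nu d) (nu c) := by
  ext x
  simp only [mem_filter, mem_range, mem_Ico, card_filter_le_eq_iff hnu hcd]
  omega

end Antitone

theorem GammaRows_of_lt {m n : ℕ} (lam : Fin m → ℕ) (nu : Fin n → ℕ) (i : Fin m) :
    GammaRows m n lam nu i = lam i := by
  simp [GammaRows]

theorem GammaRows_add {m n : ℕ} (lam : Fin m → ℕ) (nu : Fin n → ℕ) (x : ℕ) :
    GammaRows m n lam nu (m + x) = #{p | x + 1 ≤ nu p} := by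
  simp [GammaRows]

theorem prod_Icc_one_eq_prod_range {M : Type*} [CommMonoid M] (f : ℕ → M) (c : ℕ) :
    ∏ j ∈ Icc 1 c, f j = ∏ x ∈ range c, f (x + 1) := by
  rw [← Ico_add_one_right_eq_Icc, prod_Ico_eq_prod_range, Nat.add_sub_cancel]
  simp only [add_comm]

/-- the Drinfeld polynomial `P_k(u) = ∏_α (u - c(α))`, where `α`
runs over the leftmost boxes of the rows of length `k` of the skew diagram
`Γ_λ/μ` (row `i`, 0-based, has length `Γ_i - μ_i` and leftmost box of content
`μ_i - i`), equals
`∏_{i : λ_i - μ_i = k} (u - σ_i) · ∏_{j=1}^{λ_{m+k} - λ_{m+k+1}} (u + λ_{m+k+1} + m + j - 1)`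
with `σ_i = μ_i - i + 1` (1-based).  Stated as an identity in `ℤ[u]`. -/
theorem stmt_7 (m n : ℕ)
    (lam : Fin m → ℕ) (nu : Fin n → ℕ)
    (hnu : ∀ p q : Fin n, p ≤ q → nu q ≤ nu p)
    (mu : Fin m → ℕ)
    (mue : ℕ → ℕ) (hmue : ∀ i, mue i = if h : i < m then mu ⟨i, h⟩ else 0)
    (k : ℕ) (hk1 : 1 ≤ k) (hkn : k ≤ n - 1) :
    (∏ i ∈ (Finset.range (m + nu ⟨0, by omega⟩)).filter
        (fun i => GammaRows m n lam nu i - mue i = k),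
      (Polynomial.X - Polynomial.C ((mue i : ℤ) - i)))
    = (∏ i ∈ Finset.univ.filter (fun i : Fin m => lam i - mu i = k),
        (Polynomial.X - Polynomial.C ((mu i : ℤ) - (i : ℕ))))
      * ∏ j ∈ Finset.Icc 1 (nu ⟨k - 1, by omega⟩ - nu ⟨k, by omega⟩),
          (Polynomial.X + Polynomial.C ((nu ⟨k, by omega⟩ : ℤ) + m + j - 1)) := by
  have hanti : Antitone nu := fun p q => hnu p q
  have hmue_lt (i : Fin m) : mue i = mu i := by simp [hmue]
  have hmue_add (x : ℕ) : mue (m + x) = 0 := by simp [hmue]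
  rw [prod_filter, prod_range_add, ← Fin.prod_univ_eq_prod_range]
  congr 1
  · rw [prod_filter]
    simp only [GammaRows_of_lt, hmue_lt]
  · simp only [GammaRows_add, hmue_add, Nat.sub_zero]
    rw [← prod_filter,
      filter_range_card_filter_le_eq (c := ⟨k - 1, by omega⟩) (d := ⟨k, by omega⟩) hanti
        (by dsimp only; omega) (hanti (Fin.mk_le_mk.mpr (Nat.zero_le _))),
      prod_Ico_eq_prod_range, prod_Icc_one_eq_prod_range]
    refine prod_congr rfl fun x _ => ?_
    rw [sub_eq_add_neg, ← C_neg]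
    push_cast
    ring_nf
end

section
/- For the Lie superalgebra gl(1|2) and a covariant highest weight (λ₁ | λ₂, λ₃) with λ₁ ≥ 2, λ₂ ≥ λ₃ ≥ 0, and the number of nonzero entries among λ₂, λ₃ at most λ₁: the number of supertableaux of shape Γ_λ equals 4(λ₂ − λ₃ + 1); consequently dim L(λ₁ | λ₂, λ₃) = 4(λ₂ − λ₃ + 1). -/
/-- A supertableau of the shape with row lengths `G`, entries in `{1,…,m+n}`,
normalised to `0` outside the diagram. -/
def IsSuperTableau (m n : ℕ) (G : ℕ → ℕ) (T : ℕ → ℕ → ℕ) : Prop :=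
  (∀ i j, j < G i → 1 ≤ T i j ∧ T i j ≤ m + n) ∧
  (∀ i j, ¬ j < G i → T i j = 0) ∧
  (∀ i j, j + 1 < G i → T i j ≤ T i (j + 1)) ∧
  (∀ i j, j < G (i + 1) → T i j ≤ T (i + 1) j) ∧
  (∀ i j, j < G (i + 1) → T (i + 1) j ≤ m → T i j < T (i + 1) j) ∧
  (∀ i j, j + 1 < G i → m < T i j → T i j < T i (j + 1))

/-- The canonical supertableau with row-0 suffix entries `a`, `b` and with
`k` threes in the first column below row `l3`. -/
def STdecode (l1 l2 l3 a b k : ℕ) : ℕ → ℕ → ℕ := fun i j =>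
  if i = 0 then
    (if l1 ≤ j then 0 else if j = l1 - 1 then b else if j = l1 - 2 then a else 1)
  else if j = 0 ∧ i ≤ l2 then (if i ≤ l2 - k then 2 else 3)
  else if j = 1 ∧ i ≤ l3 then 3
  else 0

def STa (s : Fin 4) : ℕ := if s.val = 3 then 2 else 1
def STb (s : Fin 4) : ℕ := if s.val = 0 then 1 else if s.val = 1 then 2 else 3

lemma STab (s : Fin 4) : (STa s = 1 ∧ STb s = 1) ∨ (STa s = 1 ∧ STb s = 2) ∨
    (STa s = 1 ∧ STb s = 3) ∨ (STa s = 2 ∧ STb s = 3) := by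
  have := s.isLt
  unfold STa STb; split_ifs <;> omega

lemma STab_inj (s t : Fin 4) (ha : STa s = STa t) (hb : STb s = STb t) : s = t := by
  have hs := s.isLt; have ht := t.isLt
  unfold STa at ha; unfold STb at hb
  apply Fin.ext
  split_ifs at ha hb <;> omega

lemma STdecode_evalb (l1 l2 l3 a b k : ℕ) (h1 : 2 ≤ l1) :
    STdecode l1 l2 l3 a b k 0 (l1 - 1) = b := by
  unfold STdecode
  rw [if_pos rfl, if_neg (by omega), if_pos rfl]

lemma STdecode_evala (l1 l2 l3 a b k : ℕ) (h1 : 2 ≤ l1) :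
    STdecode l1 l2 l3 a b k 0 (l1 - 2) = a := by
  unfold STdecode
  rw [if_pos rfl, if_neg (by omega), if_neg (by omega), if_pos rfl]

lemma STdecode_evalone (l1 l2 l3 a b k j : ℕ) (hj : j + 2 < l1) :
    STdecode l1 l2 l3 a b k 0 j = 1 := by
  unfold STdecode
  rw [if_pos rfl, if_neg (by omega), if_neg (by omega), if_neg (by omega)]

lemma STdecode_evalzero (l1 l2 l3 a b k j : ℕ) (hj : l1 ≤ j) :
    STdecode l1 l2 l3 a b k 0 j = 0 := by
  unfold STdecode
  rw [if_pos rfl, if_pos hj]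

lemma STdecode_evalcol (l1 l2 l3 a b k i : ℕ) (hi : i ≠ 0) (hle : i ≤ l2) :
    STdecode l1 l2 l3 a b k i 0 = if i ≤ l2 - k then 2 else 3 := by
  unfold STdecode
  rw [if_neg hi, if_pos ⟨rfl, hle⟩]

lemma STdecode_evalcol2 (l1 l2 l3 a b k i : ℕ) (hi : i ≠ 0) (hle : i ≤ l3) :
    STdecode l1 l2 l3 a b k i 1 = 3 := by
  unfold STdecode
  rw [if_neg hi, if_neg (by simp), if_pos ⟨rfl, hle⟩]

lemma STdecode_evalout (l1 l2 l3 a b k i j : ℕ) (hi : i ≠ 0)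
    (hc1 : ¬ (j = 0 ∧ i ≤ l2)) (hc2 : ¬ (j = 1 ∧ i ≤ l3)) :
    STdecode l1 l2 l3 a b k i j = 0 := by
  unfold STdecode
  rw [if_neg hi, if_neg hc1, if_neg hc2]

set_option maxHeartbeats 1000000 in
lemma STdecode_isST (l1 l2 l3 a b k : ℕ) (h1 : 2 ≤ l1) (h23 : l3 ≤ l2)
    (hab : (a = 1 ∧ b = 1) ∨ (a = 1 ∧ b = 2) ∨ (a = 1 ∧ b = 3) ∨ (a = 2 ∧ b = 3))
    (hk : k ≤ l2 - l3)
    (G : ℕ → ℕ)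
    (hG : ∀ i, G i = if i = 0 then l1
      else (if i ≤ l2 then 1 else 0) + (if i ≤ l3 then 1 else 0)) :
    IsSuperTableau 1 2 G (STdecode l1 l2 l3 a b k) := by
  refine ⟨?_, ?_, ?_, ?_, ?_, ?_⟩ <;>
    intro i j h <;>
    [skip; skip; skip; rw [hG (i+1)] at h; rw [hG (i+1)] at h; skip] <;>
    [rw [hG i] at h; rw [hG i] at h; rw [hG i] at h; skip; skip; rw [hG i] at h] <;>
    simp only [STdecode] <;>
    rcases i with _ | i <;>
    simp only [Nat.succ_ne_zero, if_true, if_false, reduceIte, Nat.add_eq_zero,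
      and_false, false_and, if_neg (by omega : ¬ (0:ℕ) ≠ 0)] at h ⊢ <;>
    split_ifs at h ⊢ <;> omega

/-- For `gl(1|2)` and a covariant highest weight `(l1 | l2, l3)`
with `l1 ≥ 2`, `l2 ≥ l3 ≥ 0` and the number of nonzero entries among `l2, l3`
at most `l1`, the number of supertableaux of shape `Γ_λ` (first row `l1`,
first columns of heights `l2 + 1`, `l3 + 1`) equals `4 (l2 - l3 + 1)`;
consequently `dim L(l1 | l2, l3) = 4 (l2 - l3 + 1)`. -/
theorem stmt_10 (l1 l2 l3 : ℕ) (h1 : 2 ≤ l1) (h23 : l3 ≤ l2)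
    (hell : (if 0 < l2 then 1 else 0) + (if 0 < l3 then 1 else 0) ≤ l1)
    (G : ℕ → ℕ)
    (hG : ∀ i, G i = if i = 0 then l1
      else (if i ≤ l2 then 1 else 0) + (if i ≤ l3 then 1 else 0)) :
    Nat.card {T : ℕ → ℕ → ℕ // IsSuperTableau 1 2 G T} = 4 * (l2 - l3 + 1) := by
  have hG0 : G 0 = l1 := by rw [hG]; simp
  set f : Fin 4 × Fin (l2 - l3 + 1) → {T : ℕ → ℕ → ℕ // IsSuperTableau 1 2 G T} :=
    fun p => ⟨STdecode l1 l2 l3 (STa p.1) (STb p.1) p.2.val,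
      STdecode_isST l1 l2 l3 _ _ _ h1 h23 (STab p.1) (by omega) G hG⟩ with hf
  have hbij : Function.Bijective f := by
    constructor
    · rintro ⟨s, k⟩ ⟨t, k'⟩ hpq
      have heq : STdecode l1 l2 l3 (STa s) (STb s) k.val
          = STdecode l1 l2 l3 (STa t) (STb t) k'.val := congrArg Subtype.val hpq
      have ha := congrFun (congrFun heq 0) (l1 - 2)
      have hb := congrFun (congrFun heq 0) (l1 - 1)
      rw [STdecode_evala _ _ _ _ _ _ h1, STdecode_evala _ _ _ _ _ _ h1] at ha
      rw [STdecode_evalb _ _ _ _ _ _ h1, STdecode_evalb _ _ _ _ _ _ h1] at hb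
      have hst : s = t := STab_inj s t ha hb
      have hkk : k.val = k'.val := by
        by_contra hne
        have hk1 := k.isLt
        have hk2 := k'.isLt
        rcases Nat.lt_or_ge k.val k'.val with hlt | hge
        · have hcell := congrFun (congrFun heq (l2 - k.val)) 0
          rw [STdecode_evalcol _ _ _ _ _ _ _ (by omega) (by omega),
            STdecode_evalcol _ _ _ _ _ _ _ (by omega) (by omega)] at hcell
          split_ifs at hcell <;> omega
        · have hlt : k'.val < k.val := by omega
          have hcell := congrFun (congrFun heq (l2 - k'.val)) 0
          rw [STdecode_evalcol _ _ _ _ _ _ _ (by omega) (by omega),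
            STdecode_evalcol _ _ _ _ _ _ _ (by omega) (by omega)] at hcell
          split_ifs at hcell <;> omega
      exact Prod.ext hst (Fin.ext hkk)
    · rintro ⟨T, hRange, hZero, hRow, hCol, hColS, hRowS⟩
      have hOne : ∀ j, j < l1 → 1 ≤ T 0 j ∧ T 0 j ≤ 3 := by
        intro j hj
        have := hRange 0 j (by rw [hG0]; exact hj)
        omega
      have hGmono : ∀ i j, j < G (i + 1) → j < G i := by
        intro i j hj
        rw [hG (i + 1), if_neg (by omega : ¬ i + 1 = 0)] at hj
        rw [hG i]
        by_cases hi : i = 0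
        · subst hi
          rw [if_pos rfl]
          split_ifs at hell hj <;> omega
        · rw [if_neg hi]
          split_ifs at hj ⊢ <;> omega
      have hPos2 : ∀ i j, 1 ≤ i → j < G i → 2 ≤ T i j := by
        intro i j hi hj
        by_contra hle
        obtain ⟨i', rfl⟩ : ∃ i', i = i' + 1 := ⟨i - 1, by omega⟩
        have hji' : j < G i' := hGmono i' j hj
        have h5 := hColS i' j hj (by omega)
        have h5' := hRange i' j hji'
        omega
      have hChain : ∀ t j, 2 ≤ T 0 j → j + t < l1 → t + 2 ≤ T 0 (j + t) := by
        intro t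
        induction t with
        | zero => intro j h2 h3; simpa using h2
        | succ t ih =>
          intro j h2 h3
          have ih' := ih j h2 (by omega)
          have hs := hRowS 0 (j + t) (by rw [hG0]; omega) (by omega)
          have heq : j + (t + 1) = j + t + 1 := by omega
          rw [heq]
          omega
      have hRow0_1 : ∀ j, j + 2 < l1 → T 0 j = 1 := by
        intro j hj
        by_contra hne
        have h2 : 2 ≤ T 0 j := by have := hOne j (by omega); omega
        have hch := hChain (l1 - 1 - j) j h2 (by omega)
        rw [show j + (l1 - 1 - j) = l1 - 1 from by omega] at hch
        have := hOne (l1 - 1) (by omega)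
        omega
      have hab_pat : (T 0 (l1 - 2) = 1 ∧ T 0 (l1 - 1) = 1) ∨
          (T 0 (l1 - 2) = 1 ∧ T 0 (l1 - 1) = 2) ∨
          (T 0 (l1 - 2) = 1 ∧ T 0 (l1 - 1) = 3) ∨
          (T 0 (l1 - 2) = 2 ∧ T 0 (l1 - 1) = 3) := by
        have h₁ := hOne (l1 - 2) (by omega)
        have h₂ := hOne (l1 - 1) (by omega)
        have hab : T 0 (l1 - 2) ≤ T 0 (l1 - 1) := by
          have := hRow 0 (l1 - 2) (by rw [hG0]; omega)
          rwa [show l1 - 2 + 1 = l1 - 1 from by omega] at this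
        rcases Nat.lt_or_ge (T 0 (l1 - 2)) 2 with h | h
        · omega
        · have hstrict := hRowS 0 (l1 - 2) (by rw [hG0]; omega) (by omega)
          rw [show l1 - 2 + 1 = l1 - 1 from by omega] at hstrict
          omega
      have hs : ∃ s : Fin 4, STa s = T 0 (l1 - 2) ∧ STb s = T 0 (l1 - 1) := by
        rcases hab_pat with ⟨ha, hb⟩ | ⟨ha, hb⟩ | ⟨ha, hb⟩ | ⟨ha, hb⟩
        · exact ⟨0, by rw [ha]; rfl, by rw [hb]; rfl⟩
        · exact ⟨1, by rw [ha]; rfl, by rw [hb]; rfl⟩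
        · exact ⟨2, by rw [ha]; rfl, by rw [hb]; rfl⟩
        · exact ⟨3, by rw [ha]; rfl, by rw [hb]; rfl⟩
      obtain ⟨s, hsa, hsb⟩ := hs
      have hTrow : ∀ i, 1 ≤ i → i ≤ l3 → T i 0 = 2 ∧ T i 1 = 3 := by
        intro i hi1 hi3
        have hGi2 : G i = 2 := by rw [hG]; split_ifs <;> omega
        have h20 := hPos2 i 0 hi1 (by omega)
        have h21 := hPos2 i 1 hi1 (by omega)
        have hr0 := hRange i 0 (by omega)
        have hr1 := hRange i 1 (by omega)
        have hst := hRowS i 0 (by omega) (by omega)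
        have hst' : T i 0 < T i 1 := by simpa using hst
        omega
      have hTcol : ∀ i, 1 ≤ i → i ≤ l2 → 2 ≤ T i 0 ∧ T i 0 ≤ 3 := by
        intro i hi1 hi2
        have hGi : 1 ≤ G i := by rw [hG]; split_ifs <;> omega
        have := hPos2 i 0 hi1 (by omega)
        have := hRange i 0 (by omega)
        omega
      have hMono : ∀ t i, 1 ≤ i → i + t ≤ l2 → T i 0 ≤ T (i + t) 0 := by
        intro t
        induction t with
        | zero => intro i _ _; simp
        | succ t ih =>
          intro i hi1 hi2
          have ih' := ih i hi1 (by omega)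
          have hGit : 1 ≤ G (i + t + 1) := by rw [hG]; split_ifs <;> omega
          have hcc := hCol (i + t) 0 (by omega)
          have : T i 0 ≤ T (i + t + 1) 0 := by omega
          rwa [show i + (t + 1) = i + t + 1 from by omega]
      have hMono' : ∀ i i', 1 ≤ i → i ≤ i' → i' ≤ l2 → T i 0 ≤ T i' 0 := by
        intro i i' h1' h2' h3'
        have := hMono (i' - i) i h1' (by omega)
        rwa [show i + (i' - i) = i' from by omega] at this
      have hcolspec : ∃ kk, kk ≤ l2 - l3 ∧ ∀ i, 1 ≤ i → i ≤ l2 →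
          (i ≤ l2 - kk → T i 0 = 2) ∧ (l2 - kk < i → T i 0 = 3) := by
        by_cases h3 : ∃ i, (1 ≤ i ∧ i ≤ l2) ∧ T i 0 = 3
        · obtain ⟨i0, hi0a, hi0b, hi0c, hi0min⟩ :
              ∃ i0, 1 ≤ i0 ∧ i0 ≤ l2 ∧ T i0 0 = 3 ∧
                ∀ m, m < i0 → ¬ ((1 ≤ m ∧ m ≤ l2) ∧ T m 0 = 3) :=
            ⟨Nat.find h3, (Nat.find_spec h3).1.1, (Nat.find_spec h3).1.2,
              (Nat.find_spec h3).2, fun m hm => Nat.find_min h3 hm⟩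
          have hi0l3 : l3 < i0 := by
            by_contra hcon
            have := hTrow i0 hi0a (by omega)
            omega
          refine ⟨l2 + 1 - i0, by omega, ?_⟩
          intro i hi1 hi2
          constructor
          · intro hle
            have hii0 : i < i0 := by omega
            have hne := hi0min i hii0
            have := hTcol i hi1 hi2
            omega
          · intro hlt
            have hii0 : i0 ≤ i := by omega
            have hm := hMono' i0 i hi0a hii0 hi2
            have := hTcol i hi1 hi2
            omega
        · push_neg at h3
          refine ⟨0, by omega, ?_⟩
          intro i hi1 hi2
          have := h3 i ⟨hi1, hi2⟩
          have := hTcol i hi1 hi2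
          omega
      obtain ⟨kk, hkk, hkspec⟩ := hcolspec
      refine ⟨(s, ⟨kk, by omega⟩), ?_⟩
      apply Subtype.ext
      simp only [hf]
      rw [hsa, hsb]
      funext i j
      rcases Nat.eq_zero_or_pos i with hi | hi
      · subst hi
        by_cases hjl : l1 ≤ j
        · rw [STdecode_evalzero _ _ _ _ _ _ _ hjl]
          exact (hZero 0 j (by rw [hG0]; omega)).symm
        · by_cases hj1 : j = l1 - 1
          · rw [hj1, STdecode_evalb _ _ _ _ _ _ h1]
          · by_cases hj2 : j = l1 - 2
            · rw [hj2, STdecode_evala _ _ _ _ _ _ h1]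
            · rw [STdecode_evalone _ _ _ _ _ _ _ (by omega)]
              exact (hRow0_1 j (by omega)).symm
      · have hine : i ≠ 0 := by omega
        by_cases hc1 : j = 0 ∧ i ≤ l2
        · obtain ⟨rfl, hil2⟩ := hc1
          rw [STdecode_evalcol _ _ _ _ _ _ _ hine hil2]
          by_cases hk2 : i ≤ l2 - kk
          · rw [if_pos hk2]
            exact ((hkspec i hi hil2).1 hk2).symm
          · rw [if_neg hk2]
            exact ((hkspec i hi hil2).2 (by omega)).symm
        · by_cases hc2 : j = 1 ∧ i ≤ l3
          · obtain ⟨rfl, hil3⟩ := hc2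
            rw [STdecode_evalcol2 _ _ _ _ _ _ _ hine hil3]
            exact ((hTrow i hi hil3).2).symm
          · rw [STdecode_evalout _ _ _ _ _ _ _ _ hine hc1 hc2]
            refine (hZero i j ?_).symm
            rw [hG, if_neg hine]
            split_ifs <;> omega
  rw [← Nat.card_eq_of_bijective f hbij]
  simp [Nat.card_eq_fintype_card]
end

section
/- Let σ₁ > σ₂ > ⋯ > σ_m be integers of the form σ_i = μ_i − i + 1 for a partition μ, and let λ be a covariant weight with k = λ_i − μ_i ≥ 1 for a fixed index i, where i is minimal with λ_i − μ_i > 0 (so μ_j = λ_j for j < i). Then the scalar (σ_i + λ_{m+k} + m) · ∏_{j : j ≠ i, λ_j − μ_j ≥ k} (σ_i − σ_j + 1) · ∏_{j : j ≠ i, λ_j − μ_j < k} (σ_i − σ_j) is nonzero, provided μ + δ_i (obtained from μ by increasing μ_i by 1) is also of the form with μ_i + 1 ≤ λ_i; in particular σ_i − σ_{i−1} + 1 ≠ 0 under these hypotheses. -/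
/-! Every factor has a fixed sign. `σ` is strictly decreasing, so `σ_i - σ_j > 0` for `j > i`;
for `j < i` the gap `μ_j ≥ μ_i + 1` gives `σ_j ≥ σ_i + 2`, so `σ_i - σ_j + 1 < 0`. The indices
`j ≠ i` with `λ_j - μ_j ≥ k ≥ 1` all lie after `i`, and `σ_i + λ_{m+k} + m > 0` because `i < m`. -/

lemma strictAnti_of_eq_sub_index {m : ℕ} {mu : Fin m → ℕ} {sig : Fin m → ℤ}
    (hsig : ∀ j, sig j = (mu j : ℤ) - (j : ℕ)) (hmu : Antitone mu) : StrictAnti sig := by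
  intro a b hab
  have hle := hmu hab.le
  have hlt : (a : ℕ) < b := hab
  rw [hsig, hsig]
  omega

lemma add_two_le_of_eq_sub_index {m : ℕ} {mu : Fin m → ℕ} {sig : Fin m → ℤ}
    (hsig : ∀ j, sig j = (mu j : ℤ) - (j : ℕ)) {i j : Fin m} (hji : j < i)
    (hgap : mu i + 1 ≤ mu j) : sig i + 2 ≤ sig j := by
  have hlt : (j : ℕ) < i := hji
  rw [hsig, hsig]
  omega

lemma lt_of_ne_of_pos_sub {m : ℕ} {lam mu : Fin m → ℕ} {i j : Fin m}
    (hmin : ∀ j : Fin m, j < i → lam j = mu j) (hji : j ≠ i) (hpos : 0 < lam j - mu j) :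
    i < j :=
  lt_of_le_of_ne (not_lt.1 fun hlt => by simp [hmin j hlt] at hpos) hji.symm

theorem stmt_16_general (m : ℕ) (lam mu : Fin m → ℕ)
    (hmu : ∀ i j : Fin m, i ≤ j → mu j ≤ mu i)
    (lamk : ℕ) (i : Fin m) (k : ℕ) (hk1 : 1 ≤ k)
    (hmin : ∀ j : Fin m, j < i → lam j = mu j)
    (hpart : ∀ j : Fin m, j < i → mu i + 1 ≤ mu j)
    (sig : Fin m → ℤ) (hsig : ∀ j, sig j = (mu j : ℤ) - (j : ℕ)) :
    ((sig i + lamk + m) *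
        (∏ j ∈ Finset.univ.filter (fun j : Fin m => j ≠ i ∧ k ≤ lam j - mu j),
          (sig i - sig j + 1)) *
        (∏ j ∈ Finset.univ.filter (fun j : Fin m => j ≠ i ∧ lam j - mu j < k),
          (sig i - sig j)) ≠ 0) ∧
    (∀ j : Fin m, j < i → sig i - sig j + 1 ≠ 0) := by
  have hanti : StrictAnti sig := strictAnti_of_eq_sub_index hsig fun a b h => hmu a b h
  have hbefore : ∀ j < i, sig i + 2 ≤ sig j := fun j hj =>
    add_two_le_of_eq_sub_index hsig hj (hpart j hj)
  refine ⟨mul_ne_zero (mul_ne_zero ?_ ?_) ?_, fun j hj => by have := hbefore j hj; omega⟩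
  · have := i.isLt
    rw [hsig]
    omega
  · refine Finset.prod_ne_zero_iff.2 fun j hj => ?_
    obtain ⟨hji, hjk⟩ := (Finset.mem_filter.1 hj).2
    have := hanti (lt_of_ne_of_pos_sub hmin hji (by omega))
    omega
  · refine Finset.prod_ne_zero_iff.2 fun j hj => ?_
    rcases lt_or_gt_of_ne (Finset.mem_filter.1 hj).2.1 with hji | hij
    · have := hbefore j hji
      omega
    · have := hanti hij
      omega

/-- Let `σ_j = μ_j - j + 1` (strictly decreasing since `μ` is a
partition; with 0-based indexing `σ_j = μ_j - j`).  Let `i` be minimal with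
`k = λ_i - μ_i > 0`, so `λ_j = μ_j` for `j < i`, and suppose `μ + δ_i` is again
a partition (`μ_j ≥ μ_i + 1` for `j < i`).  Then the integer
`(σ_i + λ_{m+k} + m) · ∏_{j ≠ i, λ_j - μ_j ≥ k} (σ_i - σ_j + 1)
  · ∏_{j ≠ i, λ_j - μ_j < k} (σ_i - σ_j)` is nonzero; in particular
`σ_i - σ_j + 1 ≠ 0` for all `j < i`. -/
theorem stmt_16 (m n : ℕ) (lam mu : Fin m → ℕ)
    (hlam : ∀ i j : Fin m, i ≤ j → lam j ≤ lam i)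
    (hmu : ∀ i j : Fin m, i ≤ j → mu j ≤ mu i)
    (hmulam : ∀ j : Fin m, mu j ≤ lam j ∧ lam j ≤ mu j + n)
    (lamk : ℕ) (i : Fin m) (k : ℕ) (hk : k = lam i - mu i) (hk1 : 1 ≤ k)
    (hmin : ∀ j : Fin m, j < i → lam j = mu j)
    (hpart : ∀ j : Fin m, j < i → mu i + 1 ≤ mu j)
    (sig : Fin m → ℤ) (hsig : ∀ j, sig j = (mu j : ℤ) - (j : ℕ)) :
    ((sig i + lamk + m) *
        (∏ j ∈ Finset.univ.filter (fun j : Fin m => j ≠ i ∧ k ≤ lam j - mu j),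
          (sig i - sig j + 1)) *
        (∏ j ∈ Finset.univ.filter (fun j : Fin m => j ≠ i ∧ lam j - mu j < k),
          (sig i - sig j)) ≠ 0) ∧
    (∀ j : Fin m, j < i → sig i - sig j + 1 ≠ 0) :=
  stmt_16_general m lam mu hmu lamk i k hk1 hmin hpart sig hsig
end
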